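/- Let C₂ = [[a,c],[c,b]] be a 2×2 real symmetric positive-definite matrix with a ≥ b, and take s = 1. Then with γ̂ := (a²−c²)/(ab−c²)², the vector x̂ = (1,0)ᵀ is an optimal solution of the scaled linx problem with γ = γ̂, and consequently γ̂ is an optimal scaling parameter: linx(C₂,1;γ̂) ≤ linx(C₂,1;γ) for every γ > 0. -/

import Mathlib

/-! On `PP 2 1` write `x = (t, 1 - t)`. The determinant of `γ C Diag(x) C + Diag(e - x)` is an
explicit quadratic in `t` equal to `γ a²` at `x̂ = (1, 0)`, so `f(γ; x̂) = log a` for every `γ`.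
The choice of `γ̂` is exactly `γ̂ (ab - c²)² = a² - c²`, which turns the gap into
`γ̂ a² - det = (1 - t) (t (γ̂ (a² - c²) - 1) + γ̂ (a² - b²) (1 - t))`; this is nonnegative since
`a² - c² ≥ ab - c² > 0` and `a ≥ b > 0`. Hence `linx(γ̂) = log a = f(γ; x̂) ≤ linx(γ)`. -/

open Matrix Real Set

noncomputable section

/-- The feasible polytope `P(n,s)`. -/
def PP (n s : ℕ) : Set (Fin n → ℝ) :=
  {x | (∑ i, x i) = (s : ℝ) ∧ ∀ i, 0 ≤ x i ∧ x i ≤ 1}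

/-- The scaled linx objective `f(C,s;γ;x)`. -/
def fLinxScaled {n : ℕ} (C : Matrix (Fin n) (Fin n) ℝ) (s : ℕ) (γ : ℝ) (x : Fin n → ℝ) : ℝ :=
  (1 / 2) * (Real.log ((γ • (C * Matrix.diagonal x * C) + Matrix.diagonal fun i => 1 - x i).det)
    - (s : ℝ) * Real.log γ)

/-- The scaled linx bound `linx(C,s;γ)`. -/
def linxScaled (n s : ℕ) (C : Matrix (Fin n) (Fin n) ℝ) (γ : ℝ) : ℝ :=
  sSup (fLinxScaled C s γ '' PP n s)

lemma isCompact_PP (n s : ℕ) : IsCompact (PP n s) := by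
  refine (isCompact_Icc (a := (0 : Fin n → ℝ)) (b := 1)).of_isClosed_subset ?_ ?_
  · have hsum : IsClosed {x : Fin n → ℝ | ∑ i, x i = s} :=
      isClosed_eq (by fun_prop) continuous_const
    have hbox : IsClosed {x : Fin n → ℝ | ∀ i, 0 ≤ x i ∧ x i ≤ 1} := by
      simp only [Set.ofPred_forall]
      exact isClosed_iInter fun i =>
        (isClosed_le continuous_const (continuous_apply i)).inter
          (isClosed_le (continuous_apply i) continuous_const)
    exact hsum.inter hbox
  · exact fun x hx => ⟨fun i => (hx.2 i).1, fun i => (hx.2 i).2⟩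

/-- The determinant is continuous on the compact set `PP n s`, and `log y ≤ |y|` for every real `y`
(`Real.log` is even). -/
lemma bddAbove_fLinxScaled_image {n : ℕ} (C : Matrix (Fin n) (Fin n) ℝ) (s : ℕ) (γ : ℝ) :
    BddAbove (fLinxScaled C s γ '' PP n s) := by
  obtain ⟨B, hB⟩ := ((isCompact_PP n s).image (f := fun x =>
    |(γ • (C * Matrix.diagonal x * C) + Matrix.diagonal fun i => 1 - x i).det|)
    (by fun_prop)).bddAbove
  refine ⟨(1 / 2) * (B - s * Real.log γ), ?_⟩
  rintro _ ⟨x, hx, rfl⟩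
  have hlog := (Real.log_abs _).symm.trans_le (Real.log_le_self (abs_nonneg _)) |>.trans
    (hB ⟨x, hx, rfl⟩)
  unfold fLinxScaled
  linarith

lemma Matrix.PosDef.fin_two_pos {a b c : ℝ} (hC : (!![a, c; c, b] : Matrix (Fin 2) (Fin 2) ℝ).PosDef) :
    0 < a ∧ 0 < a * b - c ^ 2 := by
  refine ⟨by simpa using hC.diag_pos (i := 0), ?_⟩
  simpa [Matrix.det_fin_two_of, sq] using hC.det_pos

lemma eq_vec_of_mem_PP_two_one {x : Fin 2 → ℝ} (hx : x ∈ PP 2 1) :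
    x = ![x 0, 1 - x 0] ∧ x 0 ∈ Icc 0 1 := by
  obtain ⟨hsum, hbox⟩ := hx
  rw [Fin.sum_univ_two, Nat.cast_one] at hsum
  refine ⟨funext fun i => ?_, hbox 0⟩
  fin_cases i
  · rfl
  · simp only [Fin.mk_one, Matrix.cons_val_one, Matrix.cons_val_zero]; linarith

lemma vec_one_zero_mem_PP : (![1, 0] : Fin 2 → ℝ) ∈ PP 2 1 :=
  ⟨by simp, fun i => by fin_cases i <;> norm_num⟩

/-- The linx determinant for `C = !![a, c; c, b]` at the point `x = (t, 1 - t)` of `PP 2 1`. -/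
def linxDetFinTwo (a b c γ t : ℝ) : ℝ :=
  γ ^ 2 * (a * b - c ^ 2) ^ 2 * (t * (1 - t))
    + γ * (a ^ 2 * t ^ 2 + 2 * c ^ 2 * (t * (1 - t)) + b ^ 2 * (1 - t) ^ 2) + t * (1 - t)

lemma det_linx_fin_two (a b c γ t : ℝ) :
    (γ • (!![a, c; c, b] * Matrix.diagonal ![t, 1 - t] * !![a, c; c, b])
      + Matrix.diagonal fun i => 1 - ![t, 1 - t] i).det = linxDetFinTwo a b c γ t := by
  rw [Matrix.det_fin_two, linxDetFinTwo]
  simp [Matrix.vecMul, dotProduct, Fin.sum_univ_two]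
  ring

lemma det_linx_vec_one_zero (a b c γ : ℝ) :
    (γ • (!![a, c; c, b] * Matrix.diagonal ![1, 0] * !![a, c; c, b])
      + Matrix.diagonal fun i => 1 - ![1, 0] i).det = γ * a ^ 2 := by
  have hdet := det_linx_fin_two a b c γ 1
  rw [sub_self] at hdet
  rw [hdet, linxDetFinTwo]
  ring

lemma fLinxScaled_vec_one_zero {a γ : ℝ} (b c : ℝ) (ha : 0 < a) (hγ : 0 < γ) :
    fLinxScaled !![a, c; c, b] 1 γ ![1, 0] = Real.log a := by
  rw [fLinxScaled, det_linx_vec_one_zero, Real.log_mul hγ.ne' (by positivity), Real.log_pow]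
  push_cast
  ring

lemma linxDetFinTwo_pos {a b c γ t : ℝ} (ha : a ≠ 0) (hb : b ≠ 0) (hγ : 0 < γ)
    (ht : t ∈ Icc 0 1) : 0 < linxDetFinTwo a b c γ t := by
  obtain ⟨ht0, ht1⟩ := ht
  have htt : 0 ≤ t * (1 - t) := mul_nonneg ht0 (sub_nonneg.2 ht1)
  have hsq : 0 < a ^ 2 * t ^ 2 + b ^ 2 * (1 - t) ^ 2 := by
    rcases ht0.eq_or_lt with rfl | ht0
    · norm_num
      positivity
    · have : 0 < a ^ 2 * t ^ 2 := by positivity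
      positivity
  rw [linxDetFinTwo]
  nlinarith [mul_pos hγ hsq, mul_nonneg (by positivity : 0 ≤ γ ^ 2 * (a * b - c ^ 2) ^ 2) htt,
    mul_nonneg (by positivity : 0 ≤ γ * (2 * c ^ 2)) htt]

lemma linxDetFinTwo_le {a b c γ t : ℝ} (hγ : 0 ≤ γ) (hba : b ^ 2 ≤ a ^ 2)
    (hK : γ * (a * b - c ^ 2) ^ 2 = a ^ 2 - c ^ 2) (hγK : 1 ≤ γ * (a ^ 2 - c ^ 2))
    (ht : t ∈ Icc 0 1) : linxDetFinTwo a b c γ t ≤ γ * a ^ 2 := by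
  have hgap : γ * a ^ 2 - linxDetFinTwo a b c γ t
      = (1 - t) * (t * (γ * (a ^ 2 - c ^ 2) - 1) + γ * (a ^ 2 - b ^ 2) * (1 - t)) := by
    rw [linxDetFinTwo]
    linear_combination (-(γ * t * (1 - t))) * hK
  have : 0 ≤ (1 - t) * (t * (γ * (a ^ 2 - c ^ 2) - 1) + γ * (a ^ 2 - b ^ 2) * (1 - t)) := by
    have := ht.1
    have := sub_nonneg.2 ht.2
    have := sub_nonneg.2 hγK
    have := sub_nonneg.2 hba
    positivity
  linarith

lemma fLinxScaled_le_vec_one_zero {a b c γ : ℝ} {x : Fin 2 → ℝ} (ha : 0 < a) (hb : 0 < b)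
    (hγ : 0 < γ) (hba : b ^ 2 ≤ a ^ 2) (hK : γ * (a * b - c ^ 2) ^ 2 = a ^ 2 - c ^ 2)
    (hγK : 1 ≤ γ * (a ^ 2 - c ^ 2)) (hx : x ∈ PP 2 1) :
    fLinxScaled !![a, c; c, b] 1 γ x ≤ fLinxScaled !![a, c; c, b] 1 γ ![1, 0] := by
  obtain ⟨hxt, ht⟩ := eq_vec_of_mem_PP_two_one hx
  rw [hxt, fLinxScaled, fLinxScaled, det_linx_fin_two, det_linx_vec_one_zero]
  gcongr
  exacts [linxDetFinTwo_pos ha.ne' hb.ne' hγ ht, linxDetFinTwo_le hγ.le hba hK hγK ht]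

theorem stmt_12 (a b c : ℝ) (hab : b ≤ a)
    (hC : (!![a, c; c, b] : Matrix (Fin 2) (Fin 2) ℝ).PosDef)
    (γ0 : ℝ) (hγ0 : γ0 = (a ^ 2 - c ^ 2) / (a * b - c ^ 2) ^ 2) :
    (∀ x ∈ PP 2 1,
      fLinxScaled !![a, c; c, b] 1 γ0 x ≤ fLinxScaled !![a, c; c, b] 1 γ0 ![1, 0]) ∧
    (∀ γ : ℝ, 0 < γ →
      linxScaled 2 1 !![a, c; c, b] γ0 ≤ linxScaled 2 1 !![a, c; c, b] γ) := by
  obtain ⟨ha, hK⟩ := hC.fin_two_pos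
  have hb : 0 < b := by nlinarith [sq_nonneg c]
  have hγ0K : γ0 * (a * b - c ^ 2) ^ 2 = a ^ 2 - c ^ 2 := by
    rw [hγ0]
    field_simp
  have hKle : a * b - c ^ 2 ≤ a ^ 2 - c ^ 2 := by nlinarith
  have hγ0E : 1 ≤ γ0 * (a ^ 2 - c ^ 2) :=
    calc 1 ≤ ((a ^ 2 - c ^ 2) / (a * b - c ^ 2)) ^ 2 := one_le_pow₀ ((one_le_div hK).2 hKle)
      _ = γ0 * (a ^ 2 - c ^ 2) := by rw [hγ0, div_pow]; ring
  have hγ0pos : 0 < γ0 := hγ0 ▸ div_pos (by linarith) (by positivity)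
  have hopt : ∀ x ∈ PP 2 1,
      fLinxScaled !![a, c; c, b] 1 γ0 x ≤ fLinxScaled !![a, c; c, b] 1 γ0 ![1, 0] :=
    fun x hx => fLinxScaled_le_vec_one_zero ha hb hγ0pos (pow_le_pow_left₀ hb.le hab 2) hγ0K hγ0E hx
  refine ⟨hopt, fun γ hγ => ?_⟩
  calc linxScaled 2 1 !![a, c; c, b] γ0 = fLinxScaled !![a, c; c, b] 1 γ0 ![1, 0] :=
        IsGreatest.csSup_eq ⟨mem_image_of_mem _ vec_one_zero_mem_PP, forall_mem_image.2 hopt⟩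
    _ = fLinxScaled !![a, c; c, b] 1 γ ![1, 0] := by
        rw [fLinxScaled_vec_one_zero b c ha hγ0pos, fLinxScaled_vec_one_zero b c ha hγ]
    _ ≤ linxScaled 2 1 !![a, c; c, b] γ :=
        le_csSup (bddAbove_fLinxScaled_image _ _ _) (mem_image_of_mem _ vec_one_zero_mem_PP)
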